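/- arXiv:0911.5179 — 3 statements merged into one kernel-verified Lean document; each statement's English description precedes it below -/
import Mathlib

section
/- Let a ∈ [−1, 0) and let f : (a, ∞) → ℝ be twice differentiable with f″(p) < 0 and f′(p) > 0 for all p ∈ (a, ∞), and with f(0) = 0. Suppose p̄ ∈ (a, ∞) satisfies (p̄+1)·f′(p̄) = f(p̄). Then: (i) p̄ > 0 and p̄ is the unique solution in (a, ∞) of (p+1)·f′(p) = f(p); (ii) (p+1)·f′(p) − f(p) > 0 for all p ∈ (a, p̄) and (p+1)·f′(p) − f(p) < 0 for all p > p̄; (iii) the function c(p) := f(p)/(p+1) is strictly increasing on (a, p̄], strictly decreasing on [p̄, ∞), attains its unique global maximum on (a, ∞) at p̄, and this maximum value equals f′(p̄). -/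
/-!
The tangent gap `g p = (p + 1) f'(p) - f(p)` has derivative `(p + 1) f''(p) < 0`, so it is strictly
decreasing on `(a, ∞)`. It vanishes at `p̄` and `g 0 = f'(0) > 0`, so `p̄ > 0`, `p̄` is its only
zero, and `g` is positive before `p̄` and negative after. Since `(f(p)/(p + 1))' = g(p)/(p + 1)²`,
the quotient increases up to `p̄` and decreases afterwards, and at `p̄` it equals
`f(p̄)/(p̄ + 1) = f'(p̄)`.
-/

open Set

section TangentGap

variable {f f' f'' : ℝ → ℝ} {a p : ℝ}

theorem hasDerivAt_add_one_mul_sub (hf : HasDerivAt f (f' p) p)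
    (hf' : HasDerivAt f' (f'' p) p) :
    HasDerivAt (fun q => (q + 1) * f' q - f q) ((p + 1) * f'' p) p := by
  have := (((hasDerivAt_id p).add_const 1).mul hf').sub hf
  exact this.congr_deriv (by simp)

theorem strictAntiOn_add_one_mul_sub (ha : -1 ≤ a)
    (hder : ∀ p ∈ Ioi a, HasDerivAt f (f' p) p)
    (hder' : ∀ p ∈ Ioi a, HasDerivAt f' (f'' p) p)
    (hconc : ∀ p ∈ Ioi a, f'' p < 0) :
    StrictAntiOn (fun q => (q + 1) * f' q - f q) (Ioi a) := by
  have hgder := fun p hp => hasDerivAt_add_one_mul_sub (hder p hp) (hder' p hp)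
  refine strictAntiOn_of_deriv_neg (convex_Ioi a)
    (fun p hp => (hgder p hp).continuousAt.continuousWithinAt) fun p hp => ?_
  rw [interior_Ioi] at hp
  rw [(hgder p hp).deriv]
  exact mul_neg_of_pos_of_neg (by linarith [mem_Ioi.mp hp]) (hconc p hp)

theorem hasDerivAt_div_add_one (hf : HasDerivAt f (f' p) p) (hp : p + 1 ≠ 0) :
    HasDerivAt (fun q => f q / (q + 1)) (((p + 1) * f' p - f p) / (p + 1) ^ 2) p := by
  have := hf.div ((hasDerivAt_id p).add_const 1) hp
  exact this.congr_deriv (by simp; ring)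

variable {s : Set ℝ}

theorem strictMonoOn_div_add_one (hs : Convex ℝ s) (hs₁ : s ⊆ Ioi (-1))
    (hder : ∀ p ∈ s, HasDerivAt f (f' p) p)
    (hpos : ∀ p ∈ interior s, 0 < (p + 1) * f' p - f p) :
    StrictMonoOn (fun q => f q / (q + 1)) s := by
  have hcder : ∀ p ∈ s, HasDerivAt (fun q => f q / (q + 1))
      (((p + 1) * f' p - f p) / (p + 1) ^ 2) p := fun p hp =>
    hasDerivAt_div_add_one (hder p hp) (by linarith [mem_Ioi.mp (hs₁ hp)])
  refine strictMonoOn_of_deriv_pos hs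
    (fun p hp => (hcder p hp).continuousAt.continuousWithinAt) fun p hp => ?_
  rw [(hcder p (interior_subset hp)).deriv]
  exact div_pos (hpos p hp) (pow_pos (by linarith [mem_Ioi.mp (hs₁ (interior_subset hp))]) 2)

theorem strictAntiOn_div_add_one (hs : Convex ℝ s) (hs₁ : s ⊆ Ioi (-1))
    (hder : ∀ p ∈ s, HasDerivAt f (f' p) p)
    (hneg : ∀ p ∈ interior s, (p + 1) * f' p - f p < 0) :
    StrictAntiOn (fun q => f q / (q + 1)) s := by
  have hcder : ∀ p ∈ s, HasDerivAt (fun q => f q / (q + 1))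
      (((p + 1) * f' p - f p) / (p + 1) ^ 2) p := fun p hp =>
    hasDerivAt_div_add_one (hder p hp) (by linarith [mem_Ioi.mp (hs₁ hp)])
  refine strictAntiOn_of_deriv_neg hs
    (fun p hp => (hcder p hp).continuousAt.continuousWithinAt) fun p hp => ?_
  rw [(hcder p (interior_subset hp)).deriv]
  exact div_neg_of_neg_of_pos (hneg p hp)
    (pow_pos (by linarith [mem_Ioi.mp (hs₁ (interior_subset hp))]) 2)

end TangentGap

theorem statement1 (a : ℝ) (ha : -1 ≤ a) (ha' : a < 0)
    (f f' f'' : ℝ → ℝ)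
    (hder : ∀ p ∈ Ioi a, HasDerivAt f (f' p) p)
    (hder' : ∀ p ∈ Ioi a, HasDerivAt f' (f'' p) p)
    (hconc : ∀ p ∈ Ioi a, f'' p < 0)
    (hincr : ∀ p ∈ Ioi a, 0 < f' p)
    (hf0 : f 0 = 0)
    (pbar : ℝ) (hpbar : pbar ∈ Ioi a)
    (heq : (pbar + 1) * f' pbar = f pbar) :
    (0 < pbar ∧ ∀ p ∈ Ioi a, (p + 1) * f' p = f p → p = pbar) ∧
    (∀ p, a < p → p < pbar → 0 < (p + 1) * f' p - f p) ∧
    (∀ p, pbar < p → (p + 1) * f' p - f p < 0) ∧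
    StrictMonoOn (fun p => f p / (p + 1)) (Ioc a pbar) ∧
    StrictAntiOn (fun p => f p / (p + 1)) (Ici pbar) ∧
    (∀ p ∈ Ioi a, p ≠ pbar → f p / (p + 1) < f pbar / (pbar + 1)) ∧
    f pbar / (pbar + 1) = f' pbar := by
  have hg : StrictAntiOn (fun q => (q + 1) * f' q - f q) (Ioi a) :=
    strictAntiOn_add_one_mul_sub ha hder hder' hconc
  have hgpbar : (pbar + 1) * f' pbar - f pbar = 0 := sub_eq_zero.mpr heq
  have hpos : ∀ p, a < p → p < pbar → 0 < (p + 1) * f' p - f p := fun p hp hlt =>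
    hgpbar ▸ hg hp hpbar hlt
  have hneg : ∀ p, pbar < p → (p + 1) * f' p - f p < 0 := fun p hlt =>
    hgpbar ▸ hg hpbar (hpbar.trans hlt) hlt
  have hpbar_pos : 0 < pbar := by
    refine (hg.lt_iff_gt hpbar ha').mp ?_
    simpa [hf0, hgpbar] using hincr 0 ha'
  have hIoc : Ioc a pbar ⊆ Ioi (-1) := fun p hp => lt_of_le_of_lt ha hp.1
  have hIci : Ici pbar ⊆ Ioi a := Ici_subset_Ioi.mpr hpbar
  have hmono : StrictMonoOn (fun p => f p / (p + 1)) (Ioc a pbar) :=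
    strictMonoOn_div_add_one (convex_Ioc a pbar) hIoc (fun p hp => hder p hp.1)
      fun p hp => by rw [interior_Ioc] at hp; exact hpos p hp.1 hp.2
  have hanti : StrictAntiOn (fun p => f p / (p + 1)) (Ici pbar) :=
    strictAntiOn_div_add_one (convex_Ici pbar) (hIci.trans (Ioi_subset_Ioi ha))
      (fun p hp => hder p (hIci hp)) fun p hp => by rw [interior_Ici] at hp; exact hneg p hp
  refine ⟨⟨hpbar_pos, fun p hp hpeq => hg.injOn hp hpbar ?_⟩, hpos, hneg, hmono, hanti,
    fun p hp hne => ?_, ?_⟩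
  · simp only [sub_eq_zero.mpr hpeq, hgpbar]
  · rcases hne.lt_or_gt with hlt | hlt
    · exact hmono ⟨hp, hlt.le⟩ ⟨hpbar, le_rfl⟩ hlt
    · exact hanti self_mem_Ici hlt.le hlt
  · rw [← heq, mul_div_cancel_left₀ _ (by linarith [mem_Ioi.mp hpbar])]
end

section
/- Let m be a σ-finite measure on (0, ∞), let p > 0, ε > 0 and η > 0, and suppose that z ↦ 1 − e^{−(p−ε)z}, z ↦ 1 − e^{−pz} and z ↦ 1 − e^{−(p+η)z} are all m-integrable. Write m̄(x) = ∫_{(x,∞)} e^{−pz} m(dz) for x > 0. Then ∫₀^∞ e^{εx} ( m̄(x) − η ∫_x^∞ e^{−η(y−x)} m̄(y) dy ) dx = (Φ_m(p+η) − Φ_m(p−ε))/(η+ε), all integrals involved being absolutely convergent. -/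
/-!
Both steps are Fubini on the half-plane `y < z` for a product kernel `f y * g z`. With
`f y = e^{-η(y-x)}` and `g z = e^{-pz}`, integrating out `y ∈ (x, z)` gives
`m̄(x) - η ∫_x^∞ e^{-η(y-x)} m̄(y) dy = e^{ηx} ∫_{(x,∞)} e^{-(p+η)z} m(dz)`.
Multiplying by `e^{εx}` and applying the same swap with `f y = e^{(η+ε)y}`, `g z = e^{-(p+η)z}`
leaves `∫ (e^{-(p-ε)z} - e^{-(p+η)z}) / (η+ε) m(dz)`, a difference of Laplace exponents.
All tails `m (x, ∞)`, `x > 0`, are finite because `1 - e^{-pz}` is bounded below there.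
-/

open MeasureTheory Set

noncomputable section

/-- Laplace exponent Φ_m(θ) = ∫_{(0,∞)} (1 − e^{−θz}) m(dz). -/
def PhiM (m : Measure ℝ) (θ : ℝ) : ℝ :=
  ∫ z in Ioi (0 : ℝ), (1 - Real.exp (-θ * z)) ∂m

/-- m̄(x) = ∫_{(x,∞)} e^{−pz} m(dz). -/
def mBar (m : Measure ℝ) (p x : ℝ) : ℝ :=
  ∫ z in Ioi x, Real.exp (-p * z) ∂m

open Real

def triangleProd (f g : ℝ → ℝ) : ℝ × ℝ → ℝ :=
  {q : ℝ × ℝ | q.1 < q.2}.indicator fun q => f q.1 * g q.2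

section TriangleFubini

variable {μ ν : Measure ℝ} {f g : ℝ → ℝ} {a : ℝ}

lemma triangleProd_slice_left (y : ℝ) :
    (fun z => triangleProd f g (y, z)) = (Ioi y).indicator fun z => f y * g z := by
  ext z
  simp [triangleProd, indicator]

lemma triangleProd_slice_right (z : ℝ) :
    (fun y => triangleProd f g (y, z)) = (Iio z).indicator fun y => f y * g z := by
  ext y
  simp [triangleProd, indicator]

lemma measurable_triangleProd (hf : Measurable f) (hg : Measurable g) :
    Measurable (triangleProd f g) :=
  ((hf.comp measurable_fst).mul (hg.comp measurable_snd)).indicator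
    (measurableSet_lt measurable_fst measurable_snd)

lemma triangleProd_nonneg (hf : 0 ≤ f) (hg : 0 ≤ g) : 0 ≤ triangleProd f g :=
  indicator_nonneg fun q _ => mul_nonneg (hf q.1) (hg q.2)

lemma setIntegral_triangleProd_left (ν : Measure ℝ) {y : ℝ} (hy : a ≤ y) :
    ∫ z in Ioi a, triangleProd f g (y, z) ∂ν = f y * ∫ z in Ioi y, g z ∂ν := by
  rw [triangleProd_slice_left, setIntegral_indicator measurableSet_Ioi, Ioi_inter_Ioi,
    sup_eq_right.mpr hy, integral_const_mul]

lemma setIntegral_triangleProd_right (μ : Measure ℝ) (z : ℝ) :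
    ∫ y in Ioi a, triangleProd f g (y, z) ∂μ = (∫ y in Ioo a z, f y ∂μ) * g z := by
  rw [triangleProd_slice_right, setIntegral_indicator measurableSet_Iio, Ioi_inter_Iio,
    integral_mul_const]

lemma integrable_triangleProd [SFinite μ] [SFinite ν] (hf : Measurable f) (hg : Measurable g)
    (hf0 : 0 ≤ f) (hg0 : 0 ≤ g) (hfa : ∀ b, IntegrableOn f (Ioo a b) μ)
    (h : IntegrableOn (fun z => (∫ y in Ioo a z, f y ∂μ) * g z) (Ioi a) ν) :
    Integrable (triangleProd f g) ((μ.restrict (Ioi a)).prod (ν.restrict (Ioi a))) := by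
  rw [integrable_prod_iff' (measurable_triangleProd hf hg).aestronglyMeasurable]
  refine ⟨ae_of_all _ fun z => ?_, h.congr (ae_of_all _ fun z => ?_)⟩
  · rw [triangleProd_slice_right, integrable_indicator_iff measurableSet_Iio, IntegrableOn,
      Measure.restrict_restrict measurableSet_Iio, Iio_inter_Ioi]
    exact (hfa z).mul_const (g z)
  · simp only [Real.norm_eq_abs, abs_of_nonneg (triangleProd_nonneg hf0 hg0 _)]
    exact (setIntegral_triangleProd_right μ z).symm

lemma integrableOn_mul_setIntegral_Ioi [SFinite ν]
    (h : Integrable (triangleProd f g) ((μ.restrict (Ioi a)).prod (ν.restrict (Ioi a)))) :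
    IntegrableOn (fun y => f y * ∫ z in Ioi y, g z ∂ν) (Ioi a) μ :=
  h.integral_prod_left.congr <| ae_restrict_of_forall_mem measurableSet_Ioi fun _ hy =>
    setIntegral_triangleProd_left ν (le_of_lt hy)

lemma setIntegral_mul_setIntegral_Ioi_eq [SFinite μ] [SFinite ν]
    (h : Integrable (triangleProd f g) ((μ.restrict (Ioi a)).prod (ν.restrict (Ioi a)))) :
    ∫ y in Ioi a, f y * ∫ z in Ioi y, g z ∂ν ∂μ = ∫ z in Ioi a, (∫ y in Ioo a z, f y ∂μ) * g z ∂ν :=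
  calc ∫ y in Ioi a, f y * ∫ z in Ioi y, g z ∂ν ∂μ
      = ∫ y in Ioi a, ∫ z in Ioi a, triangleProd f g (y, z) ∂ν ∂μ :=
        setIntegral_congr_fun measurableSet_Ioi fun _ hy =>
          (setIntegral_triangleProd_left ν (le_of_lt hy)).symm
    _ = ∫ z in Ioi a, ∫ y in Ioi a, triangleProd f g (y, z) ∂μ ∂ν := integral_integral_swap h
    _ = ∫ z in Ioi a, (∫ y in Ioo a z, f y ∂μ) * g z ∂ν := by
        simp only [setIntegral_triangleProd_right]

end TriangleFubini

lemma integral_Ioo_exp_mul_add {c : ℝ} (hc : c ≠ 0) (d : ℝ) {a b : ℝ} (hab : a ≤ b) :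
    ∫ y in Ioo a b, exp (c * y + d) = (exp (c * b + d) - exp (c * a + d)) / c := by
  rw [← integral_Ioc_eq_integral_Ioo, ← intervalIntegral.integral_of_le hab,
    intervalIntegral.integral_comp_mul_add (fun u => exp u) hc, integral_exp, smul_eq_mul,
    inv_mul_eq_div]

lemma measure_Ioi_lt_top_of_integrableOn_one_sub_exp {m : Measure ℝ} {p x : ℝ} (hp : 0 < p)
    (hx : 0 < x) (h : IntegrableOn (fun z => 1 - exp (-p * z)) (Ioi 0) m) :
    m (Ioi x) < ⊤ := by
  have hpos : 0 < 1 - exp (-p * x) := by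
    have : exp (-p * x) < 1 := Real.exp_lt_one_iff.mpr (by nlinarith)
    linarith
  refine lt_of_le_of_lt ?_ (h.measure_ge_lt_top hpos)
  rw [Measure.restrict_apply' measurableSet_Ioi]
  refine measure_mono fun z (hz : x < z) => ⟨?_, hx.trans hz⟩
  have : exp (-p * z) ≤ exp (-p * x) := exp_le_exp.mpr (by nlinarith)
  change 1 - exp (-p * x) ≤ 1 - exp (-p * z)
  linarith

lemma integrableOn_exp_neg_mul_Ioi {m : Measure ℝ} {θ x : ℝ} (hθ : 0 ≤ θ) (hx : m (Ioi x) < ⊤) :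
    IntegrableOn (fun z => exp (-θ * z)) (Ioi x) m := by
  refine Measure.integrableOn_of_bounded (M := exp (-θ * x)) hx.ne (by fun_prop) ?_
  refine ae_restrict_of_forall_mem measurableSet_Ioi fun z (hz : x < z) => ?_
  rw [Real.norm_eq_abs, abs_of_pos (exp_pos _)]
  exact exp_le_exp.mpr (by nlinarith)

section Resolvent

variable {m : Measure ℝ} {p η x : ℝ}

lemma integral_Ioo_exp_resolvent_mul (hη : 0 < η) {z : ℝ} (hxz : x ≤ z) :
    (∫ y in Ioo x z, exp (-η * (y - x))) * exp (-p * z)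
      = (exp (-p * z) - exp (η * x) * exp (-(p + η) * z)) / η := by
  have hshift : (fun y => exp (-η * (y - x))) = fun y => exp (-η * y + η * x) :=
    funext fun y => by ring_nf
  rw [hshift, integral_Ioo_exp_mul_add (neg_ne_zero.mpr hη.ne') _ hxz,
    show -η * x + η * x = 0 by ring, exp_zero]
  have hprod : exp (-η * z + η * x) * exp (-p * z) = exp (η * x) * exp (-(p + η) * z) := by
    rw [← exp_add, ← exp_add]; ring_nf
  rw [div_mul_eq_mul_div, sub_mul, hprod, one_mul, div_neg, ← neg_div, neg_sub]

lemma integrable_triangleProd_resolvent [SFinite m] (hη : 0 < η) (hp : 0 ≤ p)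
    (hx : m (Ioi x) < ⊤) :
    Integrable (triangleProd (fun y => exp (-η * (y - x))) (fun z => exp (-p * z)))
      ((volume.restrict (Ioi x)).prod (m.restrict (Ioi x))) := by
  refine integrable_triangleProd (by fun_prop) (by fun_prop) (fun _ => (exp_pos _).le)
    (fun _ => (exp_pos _).le)
    (fun _ => (by fun_prop : Continuous _).integrableOn_Ioc.mono_set Ioo_subset_Ioc_self) ?_
  have hdiff := ((integrableOn_exp_neg_mul_Ioi hp hx).sub
    ((integrableOn_exp_neg_mul_Ioi (θ := p + η) (by linarith) hx).const_mul (exp (η * x)))).div_const η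
  exact IntegrableOn.congr_fun hdiff (fun z (hz : x < z) => (integral_Ioo_exp_resolvent_mul hη hz.le).symm)
    measurableSet_Ioi

lemma mBar_sub_mul_setIntegral_eq [SFinite m] (hη : 0 < η) (hp : 0 ≤ p)
    (hx : m (Ioi x) < ⊤) :
    mBar m p x - η * ∫ y in Ioi x, exp (-η * (y - x)) * mBar m p y
      = exp (η * x) * ∫ z in Ioi x, exp (-(p + η) * z) ∂m := by
  unfold mBar
  rw [setIntegral_mul_setIntegral_Ioi_eq (integrable_triangleProd_resolvent hη hp hx),
    setIntegral_congr_fun measurableSet_Ioi fun z (hz : x < z) =>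
      integral_Ioo_exp_resolvent_mul hη hz.le,
    integral_div, integral_sub (integrableOn_exp_neg_mul_Ioi hp hx)
      ((integrableOn_exp_neg_mul_Ioi (θ := p + η) (by linarith) hx).const_mul _),
    integral_const_mul]
  field_simp
  ring

end Resolvent

section Laplace

variable {m : Measure ℝ} {p ε η : ℝ}

lemma integral_Ioo_exp_mul_exp_eq (hηε : η + ε ≠ 0) {z : ℝ} (hz : 0 ≤ z) :
    (∫ y in Ioo 0 z, exp ((η + ε) * y)) * exp (-(p + η) * z)
      = ((1 - exp (-(p + η) * z)) - (1 - exp (-(p - ε) * z))) / (η + ε) := by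
  have h := integral_Ioo_exp_mul_add hηε 0 hz
  simp only [add_zero, mul_zero, exp_zero] at h
  rw [h, div_mul_eq_mul_div, sub_mul, one_mul, ← exp_add,
    show (η + ε) * z + -(p + η) * z = -(p - ε) * z by ring]
  ring

lemma integrable_triangleProd_laplace [SFinite m] (hηε : η + ε ≠ 0)
    (h1 : IntegrableOn (fun z => 1 - exp (-(p - ε) * z)) (Ioi 0) m)
    (h3 : IntegrableOn (fun z => 1 - exp (-(p + η) * z)) (Ioi 0) m) :
    Integrable (triangleProd (fun y => exp ((η + ε) * y)) (fun z => exp (-(p + η) * z)))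
      ((volume.restrict (Ioi 0)).prod (m.restrict (Ioi 0))) :=
  integrable_triangleProd (by fun_prop) (by fun_prop) (fun _ => (exp_pos _).le)
    (fun _ => (exp_pos _).le)
    (fun _ => (by fun_prop : Continuous _).integrableOn_Ioc.mono_set Ioo_subset_Ioc_self)
    (IntegrableOn.congr_fun ((h3.sub h1).div_const _)
      (fun z (hz : 0 < z) => (integral_Ioo_exp_mul_exp_eq hηε hz.le).symm) measurableSet_Ioi)

end Laplace

theorem statement5_general (m : Measure ℝ) [SigmaFinite m]
    (p ε η : ℝ) (hp : 0 < p) (hε : 0 < ε) (hη : 0 < η)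
    (h1 : IntegrableOn (fun z => 1 - Real.exp (-(p - ε) * z)) (Ioi 0) m)
    (h2 : IntegrableOn (fun z => 1 - Real.exp (-p * z)) (Ioi 0) m)
    (h3 : IntegrableOn (fun z => 1 - Real.exp (-(p + η) * z)) (Ioi 0) m) :
    (∀ x > (0 : ℝ), IntegrableOn (fun z => Real.exp (-p * z)) (Ioi x) m) ∧
    (∀ x > (0 : ℝ), IntegrableOn
        (fun y => Real.exp (-η * (y - x)) * mBar m p y) (Ioi x) volume) ∧
    IntegrableOn
      (fun x => Real.exp (ε * x) *
        (mBar m p x - η * ∫ y in Ioi x, Real.exp (-η * (y - x)) * mBar m p y))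
      (Ioi 0) volume ∧
    ∫ x in Ioi (0 : ℝ), Real.exp (ε * x) *
        (mBar m p x - η * ∫ y in Ioi x, Real.exp (-η * (y - x)) * mBar m p y)
      = (PhiM m (p + η) - PhiM m (p - ε)) / (η + ε) := by
  have hfin : ∀ x > (0 : ℝ), m (Ioi x) < ⊤ := fun x hx =>
    measure_Ioi_lt_top_of_integrableOn_one_sub_exp hp hx h2
  have hL := integrable_triangleProd_laplace (add_pos hη hε).ne' h1 h3
  have hintegrand : EqOn
      (fun x => exp (ε * x) *
        (mBar m p x - η * ∫ y in Ioi x, exp (-η * (y - x)) * mBar m p y))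
      (fun x => exp ((η + ε) * x) * ∫ z in Ioi x, exp (-(p + η) * z) ∂m) (Ioi 0) :=
    fun x hx => by
      dsimp only
      rw [mBar_sub_mul_setIntegral_eq hη hp.le (hfin x hx), ← mul_assoc, ← exp_add]
      ring_nf
  refine ⟨fun x hx => integrableOn_exp_neg_mul_Ioi hp.le (hfin x hx),
    fun x hx => integrableOn_mul_setIntegral_Ioi
      (integrable_triangleProd_resolvent hη hp.le (hfin x hx)),
    (integrableOn_mul_setIntegral_Ioi hL).congr_fun hintegrand.symm measurableSet_Ioi, ?_⟩
  rw [setIntegral_congr_fun measurableSet_Ioi hintegrand, setIntegral_mul_setIntegral_Ioi_eq hL,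
    setIntegral_congr_fun measurableSet_Ioi fun z (hz : 0 < z) =>
      integral_Ioo_exp_mul_exp_eq (add_pos hη hε).ne' hz.le,
    integral_div, integral_sub h3 h1]
  rfl

theorem statement5 (m : Measure ℝ) [SigmaFinite m] (hm0 : m (Iic 0) = 0)
    (p ε η : ℝ) (hp : 0 < p) (hε : 0 < ε) (hη : 0 < η)
    (h1 : IntegrableOn (fun z => 1 - Real.exp (-(p - ε) * z)) (Ioi 0) m)
    (h2 : IntegrableOn (fun z => 1 - Real.exp (-p * z)) (Ioi 0) m)
    (h3 : IntegrableOn (fun z => 1 - Real.exp (-(p + η) * z)) (Ioi 0) m) :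
    (∀ x > (0 : ℝ), IntegrableOn (fun z => Real.exp (-p * z)) (Ioi x) m) ∧
    (∀ x > (0 : ℝ), IntegrableOn
        (fun y => Real.exp (-η * (y - x)) * mBar m p y) (Ioi x) volume) ∧
    IntegrableOn
      (fun x => Real.exp (ε * x) *
        (mBar m p x - η * ∫ y in Ioi x, Real.exp (-η * (y - x)) * mBar m p y))
      (Ioi 0) volume ∧
    ∫ x in Ioi (0 : ℝ), Real.exp (ε * x) *
        (mBar m p x - η * ∫ y in Ioi x, Real.exp (-η * (y - x)) * mBar m p y)
      = (PhiM m (p + η) - PhiM m (p - ε)) / (η + ε) :=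
  statement5_general m p ε η hp hε hη h1 h2 h3
end
end

section
/- Let ν be a conservative dislocation measure on ∇₁ and let p ∈ ℝ with p + 1 > 0. Let ψ : ℝ → (0,1] be C¹ and nondecreasing with lim_{x→∞} ψ(x) = 1 and ψ′(y) ≤ (p+1)(1 − ψ(y)) for all y ∈ ℝ. Suppose there exist ε ∈ (0, p+1) and C > 0 such that 1 − ψ(x) ≤ C e^{−(p+1−ε)x} for all x ∈ ℝ and ∫_{∇₁} ∑_{i≥2} sᵢ^{p+1−ε} ν(ds) < ∞. Then the function x ↦ 𝓛ψ(x) = ∫_{∇₁} ( ∏ᵢ ψ(x − log sᵢ) − ψ(x) ) ν(ds) is continuous on ℝ; consequently, for any c ∈ ℝ, x ↦ −c ψ′(x) + 𝓛ψ(x) is continuous on ℝ. -/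
open MeasureTheory Filter Set

noncomputable section

/-- The space ∇₁ of nonincreasing sequences of nonnegative reals summing to 1. -/
def Nabla1 : Set (ℕ → ℝ) :=
  {s | (∀ i, 0 ≤ s i) ∧ (∀ i j, i ≤ j → s j ≤ s i) ∧ HasSum s 1}

/-- The infinite product ∏ᵢ ψ(x − log sᵢ), factors with sᵢ = 0 interpreted as 1, taken as
the limit of the partial products.  For ψ with values in (0,1] the partial products are
nonincreasing and bounded below by 0, so the limit exists and equals the infimum. -/
def fragProd (ψ : ℝ → ℝ) (s : ℕ → ℝ) (x : ℝ) : ℝ :=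
  ⨅ n : ℕ, ∏ i ∈ Finset.range n, (if s i = 0 then 1 else ψ (x - Real.log (s i)))

/-!
Write `fragProd ψ s x = ψ (x - log s₀) * R s x`, where `R` is the product over the fragments
`s₁, s₂, …`. Integrating `ψ' ≤ q (1 - ψ)` gives `1 - ψ y ≤ e^{q |y - y'|} (1 - ψ y')`; together
with `1 - ∏ aᵢ ≤ min 1 (∑ (1 - aᵢ))` and `∏ bᵢ ≤ exp (-∑ (1 - bᵢ))` this bounds `1 - R s x` by a
constant, depending only on `|x - x'|`, times `1 - R s x'`. Moreover
`0 ≤ ψ (x - log s₀) - ψ x ≤ c (1 - s₀)`, which is `ν`-integrable because `ν` is conservative.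
So if `1 - R · x` is integrable for one `x`, the integrand is locally dominated by an integrable
function and dominated convergence applies; if it is integrable for no `x`, then neither is the
integrand, and the (Bochner) integral vanishes identically.
-/

open Topology Real

def infProd (a : ℕ → ℝ) : ℝ :=
  ⨅ n, ∏ i ∈ Finset.range n, a i

section InfProd

variable {a b : ℕ → ℝ}

lemma prod_mem_Icc_zero_one {ι : Type*} (s : Finset ι) {f : ι → ℝ}
    (hf : ∀ i ∈ s, f i ∈ Icc 0 1) : ∏ i ∈ s, f i ∈ Icc (0 : ℝ) 1 :=
  ⟨Finset.prod_nonneg fun i hi => (hf i hi).1,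
    Finset.prod_le_one (fun i hi => (hf i hi).1) fun i hi => (hf i hi).2⟩

lemma prod_range_mem_Icc (ha : ∀ i, a i ∈ Icc 0 1) (n : ℕ) :
    ∏ i ∈ Finset.range n, a i ∈ Icc (0 : ℝ) 1 :=
  prod_mem_Icc_zero_one _ fun i _ => ha i

lemma antitone_prod_range (ha : ∀ i, a i ∈ Icc 0 1) :
    Antitone fun n => ∏ i ∈ Finset.range n, a i :=
  antitone_nat_of_succ_le fun n => by
    rw [Finset.prod_range_succ]
    exact mul_le_of_le_one_right (prod_range_mem_Icc ha n).1 (ha n).2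

lemma bddBelow_prod_range (ha : ∀ i, a i ∈ Icc 0 1) :
    BddBelow (range fun n => ∏ i ∈ Finset.range n, a i) :=
  ⟨0, by rintro _ ⟨n, rfl⟩; exact (prod_range_mem_Icc ha n).1⟩

lemma tendsto_prod_range_infProd (ha : ∀ i, a i ∈ Icc 0 1) :
    Tendsto (fun n => ∏ i ∈ Finset.range n, a i) atTop (𝓝 (infProd a)) :=
  tendsto_atTop_ciInf (antitone_prod_range ha) (bddBelow_prod_range ha)

lemma infProd_le_prod_range (ha : ∀ i, a i ∈ Icc 0 1) (n : ℕ) :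
    infProd a ≤ ∏ i ∈ Finset.range n, a i :=
  ciInf_le (bddBelow_prod_range ha) n

lemma infProd_mem_Icc (ha : ∀ i, a i ∈ Icc 0 1) : infProd a ∈ Icc 0 1 :=
  ⟨le_ciInf fun n => (prod_range_mem_Icc ha n).1,
    (infProd_le_prod_range ha 0).trans_eq (Finset.prod_range_zero a)⟩

lemma infProd_eq_mul_infProd_succ (ha : ∀ i, a i ∈ Icc 0 1) :
    infProd a = a 0 * infProd fun i => a (i + 1) :=
  tendsto_nhds_unique ((tendsto_prod_range_infProd ha).comp (tendsto_add_atTop_nat 1)) <| by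
    simpa only [Function.comp_def, Finset.prod_range_succ', mul_comm (a 0)] using
      (tendsto_prod_range_infProd fun i => ha (i + 1)).const_mul (a 0)

lemma one_sub_prod_le_sum {ι : Type*} (s : Finset ι) {f : ι → ℝ} (hf : ∀ i ∈ s, f i ∈ Icc 0 1) :
    1 - ∏ i ∈ s, f i ≤ ∑ i ∈ s, (1 - f i) := by
  classical
  induction s using Finset.induction_on with
  | empty => simp
  | insert j s hj ih =>
    rw [Finset.prod_insert hj, Finset.sum_insert hj]
    have hfs : ∀ i ∈ s, f i ∈ Icc 0 1 := fun i hi => hf i (Finset.mem_insert_of_mem hi)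
    have hfj := hf j (Finset.mem_insert_self j s)
    have hprod := prod_mem_Icc_zero_one s hfs
    nlinarith [ih hfs, hfj.1, hfj.2, hprod.2]

lemma prod_le_exp_neg_sum {ι : Type*} (s : Finset ι) {f : ι → ℝ} (hf : ∀ i ∈ s, 0 ≤ f i) :
    ∏ i ∈ s, f i ≤ exp (-∑ i ∈ s, (1 - f i)) := by
  rw [← Finset.sum_neg_distrib, Real.exp_sum]
  exact Finset.prod_le_prod hf fun i _ => by simpa using Real.one_sub_le_exp_neg (1 - f i)

lemma mul_min_one_le_one_sub_exp_neg {t : ℝ} (ht : 0 ≤ t) :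
    (1 - exp (-1)) * min 1 t ≤ 1 - exp (-t) := by
  rcases le_total t 1 with h | h
  · have := convexOn_exp.2 (mem_univ (-1)) (mem_univ 0) ht (sub_nonneg.2 h) (by ring)
    simp only [smul_eq_mul, mul_neg, mul_one, mul_zero, add_zero, Real.exp_zero] at this
    rw [min_eq_right h]
    linarith
  · rw [min_eq_left h, mul_one]
    exact sub_le_sub_left (exp_le_exp.2 (neg_le_neg h)) 1

lemma prod_range_sub_prod_range_le (ha : ∀ i, a i ∈ Icc 0 1) {n m : ℕ} (hnm : n ≤ m) :
    ∏ i ∈ Finset.range n, a i - ∏ i ∈ Finset.range m, a i ≤ ∑ i ∈ Finset.Ico n m, (1 - a i) := by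
  rw [← Finset.prod_range_mul_prod_Ico a hnm]
  have hP := prod_range_mem_Icc ha n
  have hQ := prod_mem_Icc_zero_one (Finset.Ico n m) fun i _ => ha i
  nlinarith [one_sub_prod_le_sum (Finset.Ico n m) fun i _ => ha i, hP.1, hP.2, hQ.2]

lemma prod_range_sub_infProd_le (ha : ∀ i, a i ∈ Icc 0 1) {g : ℕ → ℝ} (hg : Summable g)
    (hag : ∀ i, 1 - a i ≤ g i) (n : ℕ) :
    ∏ i ∈ Finset.range n, a i - infProd a ≤ ∑' i, g (i + n) := by
  refine le_of_tendsto ((tendsto_prod_range_infProd ha).const_sub _)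
    (eventually_atTop.2 ⟨n, fun m hnm => ?_⟩)
  have hg0 : ∀ i, 0 ≤ g i := fun i => (sub_nonneg.2 (ha i).2).trans (hag i)
  calc ∏ i ∈ Finset.range n, a i - ∏ i ∈ Finset.range m, a i
      ≤ ∑ i ∈ Finset.Ico n m, g i :=
        (prod_range_sub_prod_range_le ha hnm).trans (Finset.sum_le_sum fun i _ => hag i)
    _ = ∑ i ∈ Finset.range (m - n), g (i + n) := by
        rw [Finset.sum_Ico_eq_sum_range]; simp only [add_comm n]
    _ ≤ ∑' i, g (i + n) :=
        ((summable_nat_add_iff n).2 hg).sum_le_tsum _ fun i _ => hg0 _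

lemma infProd_eq_zero_of_not_summable (ha : ∀ i, a i ∈ Icc 0 1)
    (h : ¬Summable fun i => 1 - a i) : infProd a = 0 := by
  have hsum : Tendsto (fun n => ∑ i ∈ Finset.range n, (1 - a i)) atTop atTop :=
    (not_summable_iff_tendsto_nat_atTop_of_nonneg fun i => sub_nonneg.2 (ha i).2).1 h
  refine tendsto_nhds_unique (tendsto_prod_range_infProd ha) <|
    squeeze_zero (fun n => (prod_range_mem_Icc ha n).1)
      (fun n => prod_le_exp_neg_sum _ fun i _ => (ha i).1) ?_
  exact tendsto_exp_atBot.comp (tendsto_neg_atTop_atBot.comp hsum)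

/-- The constant `1 / (1 - e⁻¹)` comes from `1 - e^{-S} ≥ (1 - e⁻¹) min 1 S`, applied to
`S = ∑ (1 - bᵢ)`. -/
lemma one_sub_infProd_le (ha : ∀ i, a i ∈ Icc 0 1) (hb : ∀ i, b i ∈ Icc 0 1) {K : ℝ}
    (hK : 1 ≤ K) (hab : ∀ i, 1 - a i ≤ K * (1 - b i)) :
    1 - infProd a ≤ K / (1 - exp (-1)) * (1 - infProd b) := by
  have hden : 0 < 1 - exp (-1) := sub_pos.2 (exp_lt_one_iff.2 (by norm_num))
  refine le_of_tendsto' ((tendsto_prod_range_infProd ha).const_sub 1) fun n => ?_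
  set S := ∑ i ∈ Finset.range n, (1 - b i)
  have hS : 0 ≤ S := Finset.sum_nonneg fun i _ => sub_nonneg.2 (hb i).2
  have hSb : infProd b ≤ exp (-S) :=
    (infProd_le_prod_range hb n).trans (prod_le_exp_neg_sum _ fun i _ => (hb i).1)
  calc 1 - ∏ i ∈ Finset.range n, a i
      ≤ min 1 (K * S) := by
        refine le_min (by linarith [(prod_range_mem_Icc ha n).1]) ?_
        rw [Finset.mul_sum]
        exact (one_sub_prod_le_sum _ fun i _ => ha i).trans (Finset.sum_le_sum fun i _ => hab i)
    _ ≤ K * min 1 S := by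
        rw [mul_min_of_nonneg _ _ (zero_le_one.trans hK), mul_one]
        exact min_le_min_right _ hK
    _ ≤ K * ((1 - exp (-S)) / (1 - exp (-1))) := by
        gcongr
        rw [le_div_iff₀ hden, mul_comm]
        exact mul_min_one_le_one_sub_exp_neg hS
    _ ≤ K / (1 - exp (-1)) * (1 - infProd b) := by
        rw [mul_div_assoc', div_mul_eq_mul_div]
        gcongr

lemma continuous_infProd {a : ℕ → ℝ → ℝ} (ha : ∀ i x, a i x ∈ Icc 0 1)
    (hcont : ∀ i, Continuous (a i)) (hmono : ∀ i, Monotone (a i))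
    (hcomp : ∀ x x', ∃ K, ∀ i, 1 - a i x ≤ K * (1 - a i x')) :
    Continuous fun x => infProd fun i => a i x := by
  rw [continuous_iff_continuousAt]
  intro x₀
  by_cases hsum : Summable fun i => 1 - a i (x₀ - 1)
  · have hunif : TendstoUniformlyOn (fun n x => ∏ i ∈ Finset.range n, a i x)
        (fun x => infProd fun i => a i x) atTop (Ici (x₀ - 1)) := by
      rw [Metric.tendstoUniformlyOn_iff]
      intro δ hδ
      filter_upwards [(tendsto_sum_nat_add fun i => 1 - a i (x₀ - 1)).eventually
        (gt_mem_nhds hδ)] with n hn x hx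
      have hdom : ∀ i, 1 - a i x ≤ 1 - a i (x₀ - 1) := fun i => sub_le_sub_left (hmono i hx) 1
      rw [Real.dist_eq, abs_sub_comm,
        abs_of_nonneg (sub_nonneg.2 (infProd_le_prod_range (ha · x) n))]
      exact (prod_range_sub_infProd_le (ha · x) hsum hdom n).trans_lt hn
    refine (hunif.continuousOn (Eventually.of_forall fun n => ?_).frequently).continuousAt
      (Ici_mem_nhds (by linarith))
    exact (continuous_finsetProd _ fun i _ => hcont i).continuousOn
  · have hzero : ∀ x, (infProd fun i => a i x) = 0 := fun x =>
      infProd_eq_zero_of_not_summable (ha · x) fun hx => hsum <| by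
        obtain ⟨K, hK⟩ := hcomp (x₀ - 1) x
        exact Summable.of_nonneg_of_le (fun i => sub_nonneg.2 (ha i _).2) hK (hx.mul_left K)
    simp only [hzero]
    exact continuousAt_const

end InfProd

section Gronwall

variable {ψ : ℝ → ℝ} {q : ℝ}

/-- Grönwall: `y ↦ e^{qy} (1 - ψ y)` is nondecreasing. -/
lemma one_sub_le_exp_mul_one_sub (hψ : Differentiable ℝ ψ)
    (hψ' : ∀ y, deriv ψ y ≤ q * (1 - ψ y)) {x x' : ℝ} (h : x ≤ x') :
    1 - ψ x ≤ exp (q * (x' - x)) * (1 - ψ x') := by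
  have hderiv : ∀ y, HasDerivAt (fun y => exp (q * y) * (1 - ψ y))
      (exp (q * y) * (q * (1 - ψ y) - deriv ψ y)) y := fun y => by
    have hexp : HasDerivAt (fun y => exp (q * y)) (exp (q * y) * q) y := by
      simpa using ((hasDerivAt_id y).const_mul q).exp
    exact (hexp.mul ((hψ y).hasDerivAt.const_sub 1)).congr_deriv (by ring)
  have hmono : Monotone fun y => exp (q * y) * (1 - ψ y) :=
    monotone_of_deriv_nonneg (fun y => (hderiv y).differentiableAt) fun y => by
      rw [(hderiv y).deriv]
      exact mul_nonneg (exp_pos _).le (sub_nonneg.2 (hψ' y))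
  calc 1 - ψ x = exp (-(q * x)) * (exp (q * x) * (1 - ψ x)) := by
        rw [← mul_assoc, ← exp_add, neg_add_cancel, exp_zero, one_mul]
    _ ≤ exp (-(q * x)) * (exp (q * x') * (1 - ψ x')) :=
        mul_le_mul_of_nonneg_left (hmono h) (exp_pos _).le
    _ = exp (q * (x' - x)) * (1 - ψ x') := by
        rw [← mul_assoc, ← exp_add]; ring_nf

lemma one_sub_le_exp_abs_mul_one_sub (hψ1 : ∀ y, ψ y ≤ 1) (hmono : Monotone ψ) (hq : 0 ≤ q)
    (hψ : Differentiable ℝ ψ) (hψ' : ∀ y, deriv ψ y ≤ q * (1 - ψ y)) (x x' : ℝ) :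
    1 - ψ x ≤ exp (q * |x' - x|) * (1 - ψ x') := by
  rcases le_total x x' with h | h
  · rw [abs_of_nonneg (sub_nonneg.2 h)]
    exact one_sub_le_exp_mul_one_sub hψ hψ' h
  · calc 1 - ψ x ≤ 1 - ψ x' := sub_le_sub_left (hmono h) 1
      _ ≤ exp (q * |x' - x|) * (1 - ψ x') :=
        le_mul_of_one_le_left (sub_nonneg.2 (hψ1 x')) (one_le_exp (by positivity))

end Gronwall

-- `fragProd ψ s x` is definitionally `infProd (fragFactor ψ s x)`.
def fragFactor (ψ : ℝ → ℝ) (s : ℕ → ℝ) (x : ℝ) (i : ℕ) : ℝ :=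
  if s i = 0 then 1 else ψ (x - Real.log (s i))

section FragProd

variable {ψ : ℝ → ℝ} {q : ℝ} {s : ℕ → ℝ}

lemma fragFactor_mem_Icc (hψ : ∀ y, ψ y ∈ Icc 0 1) (x : ℝ) (i : ℕ) :
    fragFactor ψ s x i ∈ Icc 0 1 := by
  unfold fragFactor
  split_ifs
  exacts [⟨zero_le_one, le_rfl⟩, hψ _]

lemma fragProd_mem_Icc (hψ : ∀ y, ψ y ∈ Icc 0 1) (x : ℝ) : fragProd ψ s x ∈ Icc 0 1 :=
  infProd_mem_Icc (fragFactor_mem_Icc hψ x)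

lemma fragProd_eq_mul_fragProd_succ (hψ : ∀ y, ψ y ∈ Icc 0 1) (x : ℝ) :
    fragProd ψ s x = fragFactor ψ s x 0 * fragProd ψ (fun i => s (i + 1)) x :=
  infProd_eq_mul_infProd_succ (fragFactor_mem_Icc hψ x)

lemma monotone_fragFactor (hmono : Monotone ψ) (i : ℕ) : Monotone fun x => fragFactor ψ s x i :=
  fun x x' h => by
    unfold fragFactor
    split_ifs
    exacts [le_rfl, hmono (sub_le_sub_right h _)]

lemma continuous_fragFactor (hψ : Continuous ψ) (i : ℕ) :
    Continuous fun x => fragFactor ψ s x i := by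
  unfold fragFactor
  split_ifs
  exacts [continuous_const, hψ.comp (continuous_sub_right _)]

lemma measurable_fragFactor (hψ : Measurable ψ) {X : Type*} [MeasurableSpace X] {v : X → ℕ → ℝ}
    (hv : ∀ i, Measurable fun t => v t i) (x : ℝ) (i : ℕ) :
    Measurable fun t => fragFactor ψ (v t) x i :=
  Measurable.ite ((hv i) (measurableSet_singleton 0)) measurable_const
    (hψ.comp (measurable_const.sub (measurable_log.comp (hv i))))

lemma measurable_fragProd (hψ : Measurable ψ) {X : Type*} [MeasurableSpace X] {v : X → ℕ → ℝ}
    (hv : ∀ i, Measurable fun t => v t i) (x : ℝ) :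
    Measurable fun t => fragProd ψ (v t) x :=
  Measurable.iInf fun _ => Finset.measurable_prod _ fun i _ => measurable_fragFactor hψ hv x i

lemma one_sub_fragFactor_le (hcmp : ∀ x x', 1 - ψ x ≤ exp (q * |x' - x|) * (1 - ψ x'))
    (x x' : ℝ) (i : ℕ) :
    1 - fragFactor ψ s x i ≤ exp (q * |x' - x|) * (1 - fragFactor ψ s x' i) := by
  unfold fragFactor
  split_ifs
  · simp
  · simpa using hcmp (x - Real.log (s i)) (x' - Real.log (s i))

lemma one_sub_fragProd_le (hψ : ∀ y, ψ y ∈ Icc 0 1) (hq : 0 ≤ q)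
    (hcmp : ∀ x x', 1 - ψ x ≤ exp (q * |x' - x|) * (1 - ψ x')) (x x' : ℝ) :
    1 - fragProd ψ s x ≤ exp (q * |x' - x|) / (1 - exp (-1)) * (1 - fragProd ψ s x') :=
  one_sub_infProd_le (fragFactor_mem_Icc hψ x) (fragFactor_mem_Icc hψ x')
    (one_le_exp (by positivity)) (one_sub_fragFactor_le hcmp x x')

lemma continuous_fragProd (hψ : ∀ y, ψ y ∈ Icc 0 1) (hcont : Continuous ψ) (hmono : Monotone ψ)
    (hcmp : ∀ x x', 1 - ψ x ≤ exp (q * |x' - x|) * (1 - ψ x')) (s : ℕ → ℝ) :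
    Continuous fun x => fragProd ψ s x :=
  continuous_infProd (fun i x => fragFactor_mem_Icc hψ x i)
    (fun i => continuous_fragFactor hcont i) (fun i => monotone_fragFactor hmono i)
    fun x x' => ⟨_, one_sub_fragFactor_le hcmp x x'⟩

end FragProd

namespace Nabla1

variable {s : ℕ → ℝ}

lemma le_one (hs : s ∈ Nabla1) (i : ℕ) : s i ≤ 1 :=
  le_hasSum hs.2.2 i fun j _ => hs.1 j

lemma zero_pos (hs : s ∈ Nabla1) : 0 < s 0 := by
  by_contra! h
  have := hasSum_le (fun i => (hs.2.1 0 i i.zero_le).trans h) hs.2.2 hasSum_zero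
  norm_num at this

lemma measurable_apply (i : ℕ) : Measurable fun s : Nabla1 => (s : ℕ → ℝ) i :=
  (measurable_pi_apply i).comp measurable_subtype_coe

end Nabla1

section FirstFragment

variable {ψ : ℝ → ℝ} {q : ℝ} {s : ℕ → ℝ}

lemma le_fragFactor_zero (hmono : Monotone ψ) (hs : s ∈ Nabla1) (x : ℝ) :
    ψ x ≤ fragFactor ψ s x 0 := by
  rw [fragFactor, if_neg (Nabla1.zero_pos hs).ne']
  exact hmono ((le_sub_self_iff _).2 (log_nonpos (hs.1 0) (Nabla1.le_one hs 0)))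

/-- For `s₀ > 1/2` the argument of `ψ` moves by `-log s₀ ≤ 2 (1 - s₀)` and `ψ' ≤ q`;
for `s₀ ≤ 1/2` the bound is at least `1`. -/
lemma fragFactor_zero_sub_le (hψ : ∀ y, ψ y ∈ Icc 0 1) (hq : 0 ≤ q) (hdiff : Differentiable ℝ ψ)
    (hψ' : ∀ y, deriv ψ y ≤ q * (1 - ψ y)) (hs : s ∈ Nabla1) (x : ℝ) :
    fragFactor ψ s x 0 - ψ x ≤ 2 * max q 1 * (1 - s 0) := by
  have hs0 := Nabla1.zero_pos hs
  have hs1 := Nabla1.le_one hs 0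
  rw [fragFactor, if_neg hs0.ne']
  by_cases hhalf : s 0 ≤ 1 / 2
  · nlinarith [(hψ (x - log (s 0))).2, (hψ x).1, le_max_right q 1]
  · push Not at hhalf
    have hψq : ∀ y, deriv ψ y ≤ q := fun y =>
      (hψ' y).trans (mul_le_of_le_one_right hq (sub_le_self _ (hψ y).1))
    have hlip : ψ (x - log (s 0)) - ψ x ≤ q * (-log (s 0)) := by
      simpa using image_sub_le_mul_sub_of_deriv_le hdiff hψq
        ((le_sub_self_iff _).2 (log_nonpos hs0.le hs1))
    have hlog : -log (s 0) ≤ 2 * (1 - s 0) := by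
      have hinv : (s 0)⁻¹ - 1 ≤ 2 * (1 - s 0) := by
        rw [inv_eq_one_div, div_sub_one hs0.ne', div_le_iff₀ hs0]
        nlinarith
      linarith [one_sub_inv_le_log_of_pos hs0]
    calc ψ (x - log (s 0)) - ψ x ≤ q * (2 * (1 - s 0)) :=
          hlip.trans (mul_le_mul_of_nonneg_left hlog hq)
      _ ≤ 2 * max q 1 * (1 - s 0) := by nlinarith [le_max_left q 1]

lemma abs_fragProd_sub_le (hψ : ∀ y, ψ y ∈ Icc 0 1) (hmono : Monotone ψ) (hq : 0 ≤ q)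
    (hdiff : Differentiable ℝ ψ) (hψ' : ∀ y, deriv ψ y ≤ q * (1 - ψ y)) (hs : s ∈ Nabla1)
    (x : ℝ) :
    |fragProd ψ s x - ψ x| ≤ (1 - fragProd ψ (fun i => s (i + 1)) x) + 2 * max q 1 * (1 - s 0) := by
  have ha := fragFactor_mem_Icc hψ (s := s) x 0
  have hR := fragProd_mem_Icc hψ (s := fun i => s (i + 1)) x
  have hlo := le_fragFactor_zero hmono hs x
  have hhi := fragFactor_zero_sub_le hψ hq hdiff hψ' hs x
  rw [fragProd_eq_mul_fragProd_succ hψ (s := s), abs_le]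
  constructor <;> nlinarith [ha.1, ha.2, hR.1, hR.2]

lemma mul_one_sub_fragProd_succ_le (hψ : ∀ y, ψ y ∈ Icc 0 1) (hmono : Monotone ψ) (hq : 0 ≤ q)
    (hdiff : Differentiable ℝ ψ) (hψ' : ∀ y, deriv ψ y ≤ q * (1 - ψ y)) (hs : s ∈ Nabla1)
    (x : ℝ) :
    ψ x * (1 - fragProd ψ (fun i => s (i + 1)) x) ≤
      |fragProd ψ s x - ψ x| + 2 * max q 1 * (1 - s 0) := by
  have hR := fragProd_mem_Icc hψ (s := fun i => s (i + 1)) x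
  have hlo := le_fragFactor_zero hmono hs x
  have hhi := fragFactor_zero_sub_le hψ hq hdiff hψ' hs x
  rw [fragProd_eq_mul_fragProd_succ hψ (s := s)]
  nlinarith [neg_abs_le (fragFactor ψ s x 0 * fragProd ψ (fun i => s (i + 1)) x - ψ x), hR.2]

end FirstFragment

lemma MeasureTheory.Integrable.one_sub_fragProd {ψ : ℝ → ℝ} {q : ℝ} {X : Type*}
    [MeasurableSpace X] {μ : Measure X} {v : X → ℕ → ℝ} (hv : ∀ i, Measurable fun t => v t i)
    (hψ : ∀ y, ψ y ∈ Icc 0 1) (hψm : Measurable ψ) (hq : 0 ≤ q)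
    (hcmp : ∀ x x', 1 - ψ x ≤ exp (q * |x' - x|) * (1 - ψ x')) {x' : ℝ}
    (h : Integrable (fun t => 1 - fragProd ψ (v t) x') μ) (x : ℝ) :
    Integrable (fun t => 1 - fragProd ψ (v t) x) μ :=
  (h.const_mul _).mono' (measurable_const.sub (measurable_fragProd hψm hv x)).aestronglyMeasurable
    (Eventually.of_forall fun t => by
      rw [norm_of_nonneg (sub_nonneg.2 (fragProd_mem_Icc hψ x).2)]
      exact one_sub_fragProd_le hψ hq hcmp x x')

section Integral

variable {ν : Measure Nabla1} {ψ : ℝ → ℝ} {q : ℝ}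

lemma integrable_one_sub_apply_zero
    (hcons : ∫⁻ s, ENNReal.ofReal (1 - (s : ℕ → ℝ) 0) ∂ν < ⊤) :
    Integrable (fun s : Nabla1 => 1 - (s : ℕ → ℝ) 0) ν := by
  refine ⟨(measurable_const.sub (Nabla1.measurable_apply 0)).aestronglyMeasurable, ?_⟩
  rwa [hasFiniteIntegral_iff_ofReal
    (Eventually.of_forall fun s => sub_nonneg.2 (Nabla1.le_one s.2 0))]

lemma integrable_one_sub_fragProd_succ
    (hcons : ∫⁻ s, ENNReal.ofReal (1 - (s : ℕ → ℝ) 0) ∂ν < ⊤) (hψ : ∀ y, ψ y ∈ Ioc 0 1)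
    (hmono : Monotone ψ) (hq : 0 ≤ q) (hdiff : Differentiable ℝ ψ)
    (hψ' : ∀ y, deriv ψ y ≤ q * (1 - ψ y)) {x : ℝ}
    (h : Integrable (fun s : Nabla1 => fragProd ψ s x - ψ x) ν) :
    Integrable (fun s : Nabla1 => 1 - fragProd ψ (fun i => (s : ℕ → ℝ) (i + 1)) x) ν := by
  have hψ01 : ∀ y, ψ y ∈ Icc 0 1 := fun y => Ioc_subset_Icc_self (hψ y)
  refine Integrable.mono'
    ((h.abs.add ((integrable_one_sub_apply_zero hcons).const_mul (2 * max q 1))).div_const (ψ x))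
    (measurable_const.sub (measurable_fragProd hdiff.continuous.measurable
      (fun i => Nabla1.measurable_apply (i + 1)) x)).aestronglyMeasurable
    (Eventually.of_forall fun s => ?_)
  rw [norm_of_nonneg (sub_nonneg.2 (fragProd_mem_Icc hψ01 x).2), le_div_iff₀ (hψ x).1, mul_comm]
  exact mul_one_sub_fragProd_succ_le hψ01 hmono hq hdiff hψ' s.2 x

theorem continuous_integral_fragProd_sub
    (hcons : ∫⁻ s, ENNReal.ofReal (1 - (s : ℕ → ℝ) 0) ∂ν < ⊤) (hψ : ∀ y, ψ y ∈ Ioc 0 1)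
    (hmono : Monotone ψ) (hq : 0 ≤ q) (hdiff : Differentiable ℝ ψ)
    (hψ' : ∀ y, deriv ψ y ≤ q * (1 - ψ y)) :
    Continuous fun x => ∫ s, (fragProd ψ (s : ℕ → ℝ) x - ψ x) ∂ν := by
  have hψ01 : ∀ y, ψ y ∈ Icc 0 1 := fun y => Ioc_subset_Icc_self (hψ y)
  have hcmp := one_sub_le_exp_abs_mul_one_sub (fun y => (hψ y).2) hmono hq hdiff hψ'
  by_cases hR : ∃ x', Integrable
    (fun s : Nabla1 => 1 - fragProd ψ (fun i => (s : ℕ → ℝ) (i + 1)) x') ν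
  swap
  · -- the integrand is integrable for no `x`, so the Bochner integral is `0` everywhere
    have hnot : ∀ x, ¬Integrable (fun s : Nabla1 => fragProd ψ s x - ψ x) ν := fun x h =>
      hR ⟨x, integrable_one_sub_fragProd_succ hcons hψ hmono hq hdiff hψ' h⟩
    simp only [integral_undef (hnot _)]
    exact continuous_const
  obtain ⟨x', hx'⟩ := hR
  rw [continuous_iff_continuousAt]
  intro x₀
  refine continuousAt_of_dominated (bound := fun s : Nabla1 =>
      exp (q * 1) / (1 - exp (-1)) * (1 - fragProd ψ (fun i => (s : ℕ → ℝ) (i + 1)) x₀) +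
        2 * max q 1 * (1 - (s : ℕ → ℝ) 0)) ?_ ?_ ?_ ?_
  · exact Eventually.of_forall fun x => ((measurable_fragProd hdiff.continuous.measurable
      Nabla1.measurable_apply x).sub measurable_const).aestronglyMeasurable
  · filter_upwards [Metric.ball_mem_nhds x₀ one_pos] with x hx
    have hdist : |x₀ - x| ≤ 1 := by
      rw [abs_sub_comm, ← Real.dist_eq]
      exact hx.le
    have hK : exp (q * |x₀ - x|) / (1 - exp (-1)) ≤ exp (q * 1) / (1 - exp (-1)) :=
      div_le_div_of_nonneg_right (exp_le_exp.2 (mul_le_mul_of_nonneg_left hdist hq))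
        (sub_nonneg.2 (exp_le_one_iff.2 (by norm_num)))
    refine Eventually.of_forall fun s =>
      (abs_fragProd_sub_le hψ01 hmono hq hdiff hψ' s.2 x).trans (add_le_add_left ?_ _)
    exact (one_sub_fragProd_le hψ01 hq hcmp x x₀).trans
      (mul_le_mul_of_nonneg_right hK (sub_nonneg.2 (fragProd_mem_Icc hψ01 x₀).2))
  · exact ((hx'.one_sub_fragProd (fun i => Nabla1.measurable_apply (i + 1)) hψ01
      hdiff.continuous.measurable hq hcmp x₀).const_mul _).add
      ((integrable_one_sub_apply_zero hcons).const_mul _)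
  · exact Eventually.of_forall fun s =>
      ((continuous_fragProd hψ01 hdiff.continuous hmono hcmp _).sub hdiff.continuous).continuousAt

end Integral

theorem statement13_general (ν : Measure Nabla1)
    (hcons : ∫⁻ s, ENNReal.ofReal (1 - (s : ℕ → ℝ) 0) ∂ν < ⊤)
    (p : ℝ) (hp : 0 < p + 1)
    (ψ : ℝ → ℝ) (hψC1 : ContDiff ℝ 1 ψ)
    (hψrange : ∀ x, 0 < ψ x ∧ ψ x ≤ 1) (hψmono : Monotone ψ)
    (hψderiv : ∀ y, deriv ψ y ≤ (p + 1) * (1 - ψ y)) :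
    Continuous (fun x => ∫ s, (fragProd ψ (s : ℕ → ℝ) x - ψ x) ∂ν) ∧
    ∀ c : ℝ, Continuous
      (fun x => -c * deriv ψ x + ∫ s, (fragProd ψ (s : ℕ → ℝ) x - ψ x) ∂ν) := by
  have hcont := continuous_integral_fragProd_sub hcons hψrange hψmono hp.le
    (hψC1.differentiable one_ne_zero) hψderiv
  exact ⟨hcont, fun c => (continuous_const.mul (hψC1.continuous_deriv le_rfl)).add hcont⟩

theorem statement13 (ν : Measure Nabla1) [SigmaFinite ν]
    (hcons : ∫⁻ s, ENNReal.ofReal (1 - (s : ℕ → ℝ) 0) ∂ν < ⊤)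
    (p : ℝ) (hp : 0 < p + 1)
    (ψ : ℝ → ℝ) (hψC1 : ContDiff ℝ 1 ψ)
    (hψrange : ∀ x, 0 < ψ x ∧ ψ x ≤ 1) (hψmono : Monotone ψ)
    (hψlim : Tendsto ψ atTop (nhds 1))
    (hψderiv : ∀ y, deriv ψ y ≤ (p + 1) * (1 - ψ y))
    (ε C : ℝ) (hε : 0 < ε) (hεp : ε < p + 1) (hC : 0 < C)
    (htail : ∀ x, 1 - ψ x ≤ C * Real.exp (-((p + 1 - ε) * x)))
    (hν : ∫⁻ s, ENNReal.ofReal (∑' i, (s : ℕ → ℝ) (i + 1) ^ (p + 1 - ε)) ∂ν < ⊤) :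
    Continuous (fun x => ∫ s, (fragProd ψ (s : ℕ → ℝ) x - ψ x) ∂ν) ∧
    ∀ c : ℝ, Continuous
      (fun x => -c * deriv ψ x + ∫ s, (fragProd ψ (s : ℕ → ℝ) x - ψ x) ∂ν) :=
  statement13_general ν hcons p hp ψ hψC1 hψrange hψmono hψderiv
end
end
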